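/- Existence of a minimal Dörfler marking set: for a finite set A, a nonnegative weight function η : A → ℝ≥0 with positive total weight, and Θ ∈ [0,1], there exists a subset R ⊆ A of minimal cardinality satisfying Θ·∑_{a∈A} η(a) ≤ ∑_{a∈R} η(a); moreover, R can be chosen by greedily selecting elements of largest weight. -/
import Mathlib

theorem stmt_11 {A : Type*} [DecidableEq A] (S : Finset A) (hS : S.Nonempty)
    (η : A → ℝ) (hnn : ∀ a ∈ S, 0 ≤ η a) (hpos : 0 < ∑ a ∈ S, η a)
    (Θ : ℝ) (hΘ : Θ ∈ Set.Icc (0:ℝ) 1) :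
    ∃ R ⊆ S, (Θ * ∑ a ∈ S, η a ≤ ∑ a ∈ R, η a) ∧
      ∀ R' ⊆ S, (Θ * ∑ a ∈ S, η a ≤ ∑ a ∈ R', η a) → R.card ≤ R'.card := by
  classical
  set T : Finset (Finset A) :=
    S.powerset.filter (fun R => Θ * ∑ a ∈ S, η a ≤ ∑ a ∈ R, η a) with hT
  have hSmem : S ∈ T := by
    simp only [hT, Finset.mem_filter, Finset.mem_powerset]
    exact ⟨le_refl _, by nlinarith [hΘ.2]⟩
  obtain ⟨R, hR, hmin⟩ := T.exists_min_image Finset.card ⟨S, hSmem⟩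
  simp only [hT, Finset.mem_filter, Finset.mem_powerset] at hR
  refine ⟨R, hR.1, hR.2, fun R' h1 h2 => hmin R' ?_⟩
  simp only [hT, Finset.mem_filter, Finset.mem_powerset]
  exact ⟨h1, h2⟩
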